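/- arXiv:1909.13715 — 4 statements merged into one kernel-verified Lean document; each statement's English description precedes it below -/
import Mathlib

section
/- Let H be a Hilbert space, D a subset of a normed space, and for each p ∈ D let C(p) ⊂ H be defined by finitely many constraints ⟨x, g_i(p)⟩ = f_i(p) for i ∈ I_1 and ⟨x, g_i(p)⟩ ≤ f_i(p) for i ∈ I_2, where f_i : D → ℝ and g_i : D → H are locally Lipschitz. Suppose MFCQ holds for C(p̄) at x̄ ∈ C(p̄) with I_1 = ∅, i.e., there exists h ∈ H with ⟨g_i(p̄), h⟩ < 0 for all active indices i ∈ I_{p̄}(x̄) = {i ∈ I_2 : ⟨x̄, g_i(p̄)⟩ = f_i(p̄)}. Then x̄ belongs to the lower Kuratowski limit of C(p) as p → p̄ in D: for every neighbourhood V of x̄ there is a neighbourhood U of p̄ such that V ∩ C(p) ≠ ∅ for all p ∈ U ∩ D. -/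
open RealInnerProductSpace

/-- MFCQ implies that `xbar` belongs to the lower Kuratowski limit of the moving set
`C(p) = {x | ⟪x, gᵢ(p)⟫ ≤ fᵢ(p), i ∈ I₂}` as `p → pbar` in `D`. -/
theorem stmt_5 {H G : Type*} [NormedAddCommGroup H] [InnerProductSpace ℝ H]
    [CompleteSpace H] [NormedAddCommGroup G] [NormedSpace ℝ G]
    (D : Set G) {ι : Type*} [Fintype ι] [Nonempty ι]
    (f : ι → G → ℝ) (g : ι → G → H) (pbar : G) (hpbar : pbar ∈ D)
    (hLip : ∀ i, ∃ K : NNReal, ∃ t ∈ nhdsWithin pbar D,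
      LipschitzOnWith K (f i) t ∧ LipschitzOnWith K (g i) t)
    (C : G → Set H) (hC : ∀ p, C p = {x : H | ∀ i, ⟪x, g i p⟫ ≤ f i p})
    (xbar : H) (hxbar : xbar ∈ C pbar)
    (hMFCQ : ∃ h : H, ∀ i, ⟪xbar, g i pbar⟫ = f i pbar → ⟪g i pbar, h⟫ < 0) :
    ∀ V ∈ nhds xbar, ∃ U ∈ nhds pbar, ∀ p ∈ U ∩ D, (V ∩ C p).Nonempty := by
  intro V hV
  obtain ⟨h, hh⟩ := hMFCQ
  have hxbar' : ∀ i, ⟪xbar, g i pbar⟫ ≤ f i pbar := by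
    have := hxbar; rw [hC] at this; exact this
  -- choose small t > 0 with xbar + t • h ∈ V and all constraints strict at pbar
  have hev : ∀ᶠ t in nhdsWithin (0:ℝ) (Set.Ioi 0),
      (xbar + t • h ∈ V ∧ ∀ i, ⟪xbar + t • h, g i pbar⟫ < f i pbar) := by
    have h1 : ∀ᶠ t in nhdsWithin (0:ℝ) (Set.Ioi 0), xbar + t • h ∈ V := by
      have hcont : Filter.Tendsto (fun t : ℝ => xbar + t • h)
          (nhdsWithin 0 (Set.Ioi 0)) (nhds xbar) := by
        have : Filter.Tendsto (fun t : ℝ => xbar + t • h) (nhds 0) (nhds xbar) := by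
          have : Continuous (fun t : ℝ => xbar + t • h) := by continuity
          simpa using this.tendsto 0
        exact this.mono_left nhdsWithin_le_nhds
      exact hcont.eventually (eventually_mem_nhds_iff.mpr hV |>.mono fun y hy => mem_of_mem_nhds hy)
    have h2 : ∀ i, ∀ᶠ t in nhdsWithin (0:ℝ) (Set.Ioi 0),
        ⟪xbar + t • h, g i pbar⟫ < f i pbar := by
      intro i
      rcases lt_or_eq_of_le (hxbar' i) with hlt | heq
      · have hcont : Filter.Tendsto (fun t : ℝ => ⟪xbar + t • h, g i pbar⟫)
            (nhdsWithin 0 (Set.Ioi 0)) (nhds ⟪xbar, g i pbar⟫) := by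
          have : Continuous (fun t : ℝ => ⟪xbar + t • h, g i pbar⟫) := by
            exact (continuous_const.add (continuous_id.smul continuous_const)).inner
              continuous_const
          simpa using (this.tendsto 0).mono_left nhdsWithin_le_nhds
        exact hcont.eventually (Filter.Tendsto.eventually_lt_const hlt Filter.tendsto_id
          |>.mono fun _ h => h) |>.mono fun t ht => ht
      · have hd : ⟪g i pbar, h⟫ < 0 := hh i heq
        filter_upwards [self_mem_nhdsWithin] with t ht
        have ht' : (0:ℝ) < t := ht
        have : ⟪xbar + t • h, g i pbar⟫ = f i pbar + t * ⟪g i pbar, h⟫ := by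
          rw [inner_add_left, real_inner_smul_left, heq, real_inner_comm]
        rw [this]
        nlinarith
    exact h1.and ((Filter.eventually_all).mpr h2)
  obtain ⟨t, htmem⟩ := hev.exists
  obtain ⟨hxV, hstrict⟩ := htmem
  set x := xbar + t • h with hx
  -- continuity of constraints within D
  have hcw : ∀ i, ∀ᶠ p in nhdsWithin pbar D, ⟪x, g i p⟫ ≤ f i p := by
    intro i
    obtain ⟨K, s, hs, hfL, hgL⟩ := hLip i
    have hps : pbar ∈ s := mem_of_mem_nhdsWithin hpbar hs
    have hft : Filter.Tendsto (f i) (nhdsWithin pbar D) (nhds (f i pbar)) := by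
      have := (hfL.continuousOn pbar hps)
      exact this.mono_of_mem_nhdsWithin hs
    have hgt : Filter.Tendsto (g i) (nhdsWithin pbar D) (nhds (g i pbar)) := by
      have := (hgL.continuousOn pbar hps)
      exact this.mono_of_mem_nhdsWithin hs
    have hit : Filter.Tendsto (fun p => ⟪x, g i p⟫) (nhdsWithin pbar D)
        (nhds ⟪x, g i pbar⟫) := by
      exact (Continuous.inner continuous_const continuous_id).continuousAt.tendsto.comp hgt
    have : ∀ᶠ p in nhdsWithin pbar D, ⟪x, g i p⟫ < f i p :=
      hit.eventually_lt hft (hstrict i)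
    exact this.mono fun p hp => hp.le
  have hall : ∀ᶠ p in nhdsWithin pbar D, ∀ i, ⟪x, g i p⟫ ≤ f i p :=
    (Filter.eventually_all).mpr hcw
  rw [eventually_nhdsWithin_iff] at hall
  refine ⟨{p | p ∈ D → ∀ i, ⟪x, g i p⟫ ≤ f i p}, hall, ?_⟩
  intro p hp
  refine ⟨x, hxV, ?_⟩
  rw [hC]
  exact hp.1 hp.2
end

section
/- Let H be a Hilbert space and C, C' nonempty closed convex subsets of H. For v̄ ∈ H the projections P_C(v̄), P_{C'}(v̄) satisfy a Hölder estimate with exponent 1/2 with respect to the bounded Hausdorff distance: there exists ℓ_H > 0 (depending on v̄ and a bound on the sets) such that ‖P_C(v̄) − P_{C'}(v̄)‖ ≤ ℓ_H [d_ρ(C, C')]^{1/2}, where d_ρ denotes the ρ-bounded Hausdorff distance. -/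
/-!
Write `x = P_C v̄`, `x' = P_{C'} v̄` and `d` for the Hausdorff distance of the truncated sets.
Nearest points in the truncated sets give `y ∈ C'` and `z ∈ C` with `‖x - y‖ ≤ d` and
`‖x' - z‖ ≤ d`. Adding the variational inequalities `⟪v̄ - x, z - x⟫ ≤ 0` and
`⟪v̄ - x', y - x'⟫ ≤ 0` leaves `‖x - x'‖² ≤ ‖v̄ - x‖ ‖z - x'‖ + ‖v̄ - x'‖ ‖y - x‖ ≤ 4 ρ d`,
since `x, x', v̄` lie in the `ρ`-ball.
-/

open Metric Bornology RealInnerProductSpace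

section Projection

variable {H : Type*} [NormedAddCommGroup H] [InnerProductSpace ℝ H]

lemma Convex.inner_sub_nonpos_of_forall_norm_sub_le {C : Set H} (hC : Convex ℝ C) {v x w : H}
    (hx : x ∈ C) (hmin : ∀ z ∈ C, ‖x - v‖ ≤ ‖z - v‖) (hw : w ∈ C) :
    ⟪v - x, w - x⟫ ≤ 0 := by
  have : Nonempty C := ⟨⟨x, hx⟩⟩
  have hinf : ‖v - x‖ = ⨅ z : C, ‖v - z‖ :=
    le_antisymm (le_ciInf fun z => by simpa only [norm_sub_rev v] using hmin z z.2)
      (ciInf_le (⟨0, Set.forall_mem_range.2 fun _ => norm_nonneg _⟩ :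
        BddBelow (Set.range fun z : C => ‖v - z‖)) ⟨x, hx⟩)
  exact (norm_eq_iInf_iff_real_inner_le_zero hC hx).1 hinf w hw

lemma norm_sub_sq_le_of_inner_nonpos {v x x' y z : H}
    (hx : ⟪v - x, z - x⟫ ≤ 0) (hx' : ⟪v - x', y - x'⟫ ≤ 0) :
    ‖x - x'‖ ^ 2 ≤ ‖v - x‖ * ‖z - x'‖ + ‖v - x'‖ * ‖y - x‖ := by
  have hsplit : ‖x - x'‖ ^ 2 = ⟪v - x, x' - x⟫ + ⟪v - x', x - x'⟫ := by
    rw [← real_inner_self_eq_norm_sq, ← neg_sub x x', inner_neg_right, ← sub_eq_neg_add,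
      ← inner_sub_left, sub_sub_sub_cancel_left]
  have hz : ⟪v - x, x' - x⟫ = ⟪v - x, z - x⟫ - ⟪v - x, z - x'⟫ := by
    rw [← inner_sub_right, sub_sub_sub_cancel_left]
  have hy : ⟪v - x', x - x'⟫ = ⟪v - x', y - x'⟫ - ⟪v - x', y - x⟫ := by
    rw [← inner_sub_right, sub_sub_sub_cancel_left]
  linarith [neg_le_of_abs_le (abs_real_inner_le_norm (v - x) (z - x')),
    neg_le_of_abs_le (abs_real_inner_le_norm (v - x') (y - x))]

lemma Convex.exists_norm_sub_le_hausdorffDist [CompleteSpace H] {K L : Set H} {x : H}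
    (hx : x ∈ K) (hL : L.Nonempty) (hLc : IsClosed L) (hLconv : Convex ℝ L)
    (hKb : IsBounded K) (hLb : IsBounded L) :
    ∃ y ∈ L, ‖y - x‖ ≤ hausdorffDist K L := by
  obtain ⟨y, hy, hxy⟩ := exists_norm_eq_iInf_of_complete_convex hL hLc.isComplete hLconv x
  refine ⟨y, hy, ?_⟩
  have : ‖y - x‖ = infDist x L := by
    simp only [infDist_eq_iInf, dist_eq_norm, norm_sub_rev y, hxy]
  exact this ▸ infDist_le_hausdorffDist_of_mem hx
    (hausdorffEDist_ne_top_of_nonempty_of_bounded ⟨x, hx⟩ hL hKb hLb)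

end Projection

/-- Hölder continuity with exponent `1/2` of the metric projection of a fixed point `vbar`
with respect to the `ρ`-bounded Hausdorff distance between closed convex sets. -/
theorem stmt_7 {H : Type*} [NormedAddCommGroup H] [InnerProductSpace ℝ H]
    [CompleteSpace H] (vbar : H) (ρ : ℝ) (hρ : ‖vbar‖ ≤ ρ) :
    ∃ ℓH > (0 : ℝ), ∀ C C' : Set H,
      C.Nonempty → C'.Nonempty → IsClosed C → IsClosed C' →
      Convex ℝ C → Convex ℝ C' →
      ∀ x x' : H,
        (x ∈ C ∧ ∀ z ∈ C, ‖x - vbar‖ ≤ ‖z - vbar‖) →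
        (x' ∈ C' ∧ ∀ z ∈ C', ‖x' - vbar‖ ≤ ‖z - vbar‖) →
        ‖x‖ ≤ ρ → ‖x'‖ ≤ ρ →
        ‖x - x'‖ ≤ ℓH * Real.sqrt
          (Metric.hausdorffDist (C ∩ Metric.closedBall 0 ρ)
            (C' ∩ Metric.closedBall 0 ρ)) := by
  refine ⟨2 * Real.sqrt ρ + 1, by positivity, ?_⟩
  intro C C' _ _ hCc hC'c hCconv hC'conv x x' ⟨hxC, hxmin⟩ ⟨hx'C, hx'min⟩ hxρ hx'ρ
  set B := closedBall (0 : H) ρ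
  set d := hausdorffDist (C ∩ B) (C' ∩ B)
  have hρ0 : 0 ≤ ρ := (norm_nonneg vbar).trans hρ
  have hxB : x ∈ C ∩ B := ⟨hxC, mem_closedBall_zero_iff.2 hxρ⟩
  have hx'B : x' ∈ C' ∩ B := ⟨hx'C, mem_closedBall_zero_iff.2 hx'ρ⟩
  have hCB : IsBounded (C ∩ B) := isBounded_closedBall.subset Set.inter_subset_right
  have hC'B : IsBounded (C' ∩ B) := isBounded_closedBall.subset Set.inter_subset_right
  obtain ⟨y, hy, hxy⟩ := (hC'conv.inter (convex_closedBall 0 ρ)).exists_norm_sub_le_hausdorffDist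
    hxB ⟨x', hx'B⟩ (hC'c.inter isClosed_closedBall) hCB hC'B
  obtain ⟨z, hz, hx'z⟩ := (hCconv.inter (convex_closedBall 0 ρ)).exists_norm_sub_le_hausdorffDist
    hx'B ⟨x, hxB⟩ (hCc.inter isClosed_closedBall) hC'B hCB
  rw [hausdorffDist_comm] at hx'z
  have hvx : ‖vbar - x‖ ≤ 2 * ρ := (norm_sub_le _ _).trans (by linarith)
  have hvx' : ‖vbar - x'‖ ≤ 2 * ρ := (norm_sub_le _ _).trans (by linarith)
  have hsq : ‖x - x'‖ ^ 2 ≤ (2 * Real.sqrt ρ * Real.sqrt d) ^ 2 := calc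
    ‖x - x'‖ ^ 2 ≤ ‖vbar - x‖ * ‖z - x'‖ + ‖vbar - x'‖ * ‖y - x‖ :=
      norm_sub_sq_le_of_inner_nonpos
        (hCconv.inner_sub_nonpos_of_forall_norm_sub_le hxC hxmin hz.1)
        (hC'conv.inner_sub_nonpos_of_forall_norm_sub_le hx'C hx'min hy.1)
    _ ≤ 2 * ρ * d + 2 * ρ * d := by gcongr
    _ = (2 * Real.sqrt ρ * Real.sqrt d) ^ 2 := by
      rw [mul_pow, mul_pow, Real.sq_sqrt hρ0, Real.sq_sqrt hausdorffDist_nonneg]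
      ring
  calc ‖x - x'‖ ≤ 2 * Real.sqrt ρ * Real.sqrt d :=
        (pow_le_pow_iff_left₀ (norm_nonneg _) (by positivity) two_ne_zero).1 hsq
    _ ≤ (2 * Real.sqrt ρ + 1) * Real.sqrt d :=
        mul_le_mul_of_nonneg_right (by linarith) (Real.sqrt_nonneg d)
end

section
/- Consider in ℝ² the parametric set C(p) = {x ∈ ℝ² : ⟨x, (−1+p, 0)⟩ ≤ 0, ⟨x, (0, p)⟩ ≤ 0} for p ∈ ℝ near 0, and the projection P(p,v) of v onto C(p). For v in a neighbourhood of v̄ = (−1,−1), P(p,v) = (0,0) if −1 < p < 0 and P(p,v) = (0, v₂) if 0 ≤ p < 1. Consequently, the projection mapping P is not continuous at (p̄, v̄) = (0, (−1,−1)). -/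
/-! For `-1 < p < 0` the cone `C(p)` is the closed positive quadrant, so a vector `v` with
nonpositive coordinates has nearest point `0`. For `0 ≤ p < 1` the cone lies in the half-plane
`x₀ ≥ 0` and contains `(0, v₁)`, which is then the nearest point. Hence `P(p, v̄)` jumps from
`0` to `(0, -1)` as `p` crosses `0`. -/

open Set Filter Topology

local notation "ℝ²" => EuclideanSpace ℝ (Fin 2)

lemma EuclideanSpace.norm_sq_fin_two (x : ℝ²) : ‖x‖ ^ 2 = x 0 ^ 2 + x 1 ^ 2 := by
  simp [EuclideanSpace.real_norm_sq_eq, Fin.sum_univ_two]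

lemma sq_add_sq_le_sub_sq {a c : ℝ} (ha : 0 ≤ a) (hc : c ≤ 0) :
    a ^ 2 + c ^ 2 ≤ (a - c) ^ 2 := by
  nlinarith

lemma eq_zero_of_norm_sub_le_norm {q v : ℝ²} (hq0 : 0 ≤ q 0) (hq1 : 0 ≤ q 1)
    (hv0 : v 0 ≤ 0) (hv1 : v 1 ≤ 0) (h : ‖q - v‖ ≤ ‖v‖) : q = 0 := by
  have hsq : ‖q - v‖ ^ 2 ≤ ‖v‖ ^ 2 := by gcongr
  simp only [EuclideanSpace.norm_sq_fin_two, PiLp.sub_apply] at hsq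
  have h0 := sq_add_sq_le_sub_sq hq0 hv0
  have h1 := sq_add_sq_le_sub_sq hq1 hv1
  have hq : q 0 = 0 ∧ q 1 = 0 := by constructor <;> nlinarith
  ext i
  fin_cases i <;> simp [hq]

lemma eq_of_norm_sub_le_norm_sub {q v : ℝ²} (hq0 : 0 ≤ q 0) (hv0 : v 0 ≤ 0)
    (h : ‖q - v‖ ≤ ‖!₂[0, v 1] - v‖) : q 0 = 0 ∧ q 1 = v 1 := by
  have hsq : ‖q - v‖ ^ 2 ≤ ‖!₂[0, v 1] - v‖ ^ 2 := by gcongr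
  simp only [EuclideanSpace.norm_sq_fin_two, PiLp.sub_apply, Matrix.cons_val_zero,
    Matrix.cons_val_one, Matrix.cons_val_fin_one, zero_sub, neg_sq, sub_self] at hsq
  have h0 := sq_add_sq_le_sub_sq hq0 hv0
  constructor <;> nlinarith

def cone (p : ℝ) : Set ℝ² := {x | (-1 + p) * x 0 ≤ 0 ∧ p * x 1 ≤ 0}

section NearestPoint

variable {p : ℝ} {v q : ℝ²}

lemma eq_zero_of_isNearest_cone_of_neg (hq : q ∈ cone p)
    (hmin : ∀ y ∈ cone p, ‖q - v‖ ≤ ‖y - v‖) (hp : p ∈ Ioo (-1) 0) (hv0 : v 0 ≤ 0)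
    (hv1 : v 1 ≤ 0) : q = 0 := by
  obtain ⟨hq0, hq1⟩ := hq
  refine eq_zero_of_norm_sub_le_norm ?_ ?_ hv0 hv1 (by simpa using hmin 0 (by simp [cone]))
  · exact nonneg_of_mul_nonpos_right hq0 (by linarith [hp.2])
  · exact nonneg_of_mul_nonpos_right hq1 hp.2

lemma eq_of_isNearest_cone_of_nonneg (hq : q ∈ cone p)
    (hmin : ∀ y ∈ cone p, ‖q - v‖ ≤ ‖y - v‖) (hp0 : 0 ≤ p) (hp1 : p < 1) (hv0 : v 0 ≤ 0)
    (hv1 : v 1 ≤ 0) : q 0 = 0 ∧ q 1 = v 1 := by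
  refine eq_of_norm_sub_le_norm_sub ?_ hv0 (hmin _ ⟨by simp, ?_⟩)
  · exact nonneg_of_mul_nonpos_right hq.1 (by linarith)
  · simpa using mul_nonpos_of_nonneg_of_nonpos hp0 hv1

end NearestPoint

/-- Projection onto `C(p) = {x | (-1+p)x₀ ≤ 0, p·x₁ ≤ 0}` near `vbar = (-1,-1)` equals `0`
for `-1 < p < 0` and `(0, v₁)` for `0 ≤ p < 1`; hence the projection mapping is not
continuous at `(0, vbar)` even though the data are Lipschitz in `p`. -/
theorem stmt_8 (C : ℝ → Set (EuclideanSpace ℝ (Fin 2)))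
    (hC : ∀ p, C p = {x : EuclideanSpace ℝ (Fin 2) |
      (-1 + p) * x 0 ≤ 0 ∧ p * x 1 ≤ 0})
    (P : ℝ → EuclideanSpace ℝ (Fin 2) → EuclideanSpace ℝ (Fin 2))
    (hP : ∀ p v, P p v ∈ C p ∧ ∀ y ∈ C p, ‖P p v - v‖ ≤ ‖y - v‖)
    (vbar : EuclideanSpace ℝ (Fin 2)) (hvbar0 : vbar 0 = -1) (hvbar1 : vbar 1 = -1) :
    (∃ ε > (0 : ℝ), ∀ v : EuclideanSpace ℝ (Fin 2), ‖v - vbar‖ < ε →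
      (∀ p : ℝ, -1 < p → p < 0 → P p v = 0) ∧
      (∀ p : ℝ, 0 ≤ p → p < 1 → (P p v) 0 = 0 ∧ (P p v) 1 = v 1)) ∧
    ¬ ContinuousAt (fun q : ℝ × EuclideanSpace ℝ (Fin 2) => P q.1 q.2) (0, vbar) := by
  obtain rfl : C = cone := funext hC
  have hnonpos (v : ℝ²) (hv : ‖v - vbar‖ < 1) (i : Fin 2) (hi : vbar i = -1) : v i ≤ 0 := by
    have := (abs_le.mp ((PiLp.norm_apply_le (v - vbar) i).trans hv.le)).2
    simp only [PiLp.sub_apply, hi] at this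
    linarith
  have hproj (v : ℝ²) (hv : ‖v - vbar‖ < 1) :
      (∀ p : ℝ, -1 < p → p < 0 → P p v = 0) ∧
      (∀ p : ℝ, 0 ≤ p → p < 1 → (P p v) 0 = 0 ∧ (P p v) 1 = v 1) :=
    ⟨fun p hp1 hp0 => eq_zero_of_isNearest_cone_of_neg (hP p v).1 (hP p v).2 ⟨hp1, hp0⟩
        (hnonpos v hv 0 hvbar0) (hnonpos v hv 1 hvbar1),
      fun p hp0 hp1 => eq_of_isNearest_cone_of_nonneg (hP p v).1 (hP p v).2 hp0 hp1
        (hnonpos v hv 0 hvbar0) (hnonpos v hv 1 hvbar1)⟩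
  refine ⟨⟨1, one_pos, hproj⟩, fun hcont => ?_⟩
  have hleft : Tendsto (fun p => P p vbar) (𝓝[<] 0) (𝓝 (P 0 vbar)) :=
    (hcont.comp (f := fun p : ℝ => (p, vbar)) (by fun_prop)).tendsto.mono_left nhdsWithin_le_nhds
  have hzero : P 0 vbar = 0 := by
    refine tendsto_nhds_unique (hleft.congr' ?_) tendsto_const_nhds
    filter_upwards [Ioo_mem_nhdsLT (show (-1 : ℝ) < 0 by norm_num)] with p hp
    exact (hproj vbar (by simp)).1 p hp.1 hp.2
  have h1 := ((hproj vbar (by simp)).2 0 le_rfl one_pos).2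
  simp [hzero, hvbar1] at h1
end

section
/- Let H be a Hilbert space and suppose RCRCQ holds at (p̄, x̄), x̄ ∈ C(p̄), for the multifunction C(p) = {x : ⟨x,g_i(p)⟩ = f_i(p), i ∈ I_1; ⟨x,g_i(p)⟩ ≤ f_i(p), i ∈ I_2}, with C(p) ≠ ∅ for p near p̄. Then there exist a subset I_1' ⊂ I_1 with |I_1'| = rank{g_i(p̄) : i ∈ I_1} and a neighbourhood U of p̄ such that for all p ∈ U the vectors g_i(p), i ∈ I_1', are linearly independent and {x : ⟨x,g_i(p)⟩ = f_i(p), i ∈ I_1, ⟨x,g_i(p)⟩ ≤ f_i(p), i ∈ I_2} = {x : ⟨x,g_i(p)⟩ = f_i(p), i ∈ I_1', ⟨x,g_i(p)⟩ ≤ f_i(p), i ∈ I_2}. -/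
open RealInnerProductSpace

/-!
A linearly independent subfamily `I₁'` of `{g i p̄ : i ∈ I₁}` spanning the same space stays
linearly independent for `p` near `p̄`, because the `g i` are continuous and linear independence
is an open condition. Near `p̄` its span therefore has dimension `|I₁'| = rank {g i p̄ : i ∈ I₁}`,
which by RCRCQ is also the dimension of `span {g i p : i ∈ I₁}`; so the two spans coincide. Given
a point `y ∈ C p`, every equation `⟪x, g j p⟫ = f j p` with `j ∈ I₁` is then a linear combination
of the equations indexed by `I₁'`, both for `x` and for `y`.
-/

open Filter Module Submodule Topology

section LinearAlgebra

variable {K V ι : Type*} [DivisionRing K] [AddCommGroup V] [Module K V]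

theorem Finset.exists_subset_linearIndependent_span_image_eq (v : ι → V) (s : Finset ι) :
    ∃ t ⊆ s, LinearIndependent K (fun i : t => v i) ∧
      span K (v '' (t : Set ι)) = span K (v '' (s : Set ι)) := by
  classical
  obtain ⟨b, hbs, -, hspan, hli⟩ :=
    exists_linearIndepOn_extension (linearIndepOn_empty K v) (Set.empty_subset (s : Set ι))
  have hb : b.Finite := s.finite_toSet.subset hbs
  refine ⟨hb.toFinset, by simpa using hbs, ?_, ?_⟩
  · exact (hb.coe_toFinset ▸ hli :)
  · rw [hb.coe_toFinset]
    exact le_antisymm (span_mono (Set.image_mono hbs)) (span_le.2 hspan)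

theorem Finset.finrank_span_image_eq_card {v : ι → V} {t : Finset ι}
    (hli : LinearIndependent K (fun i : t => v i)) :
    finrank K (span K (v '' (t : Set ι))) = t.card := by
  rw [Set.image_eq_range]
  exact (finrank_span_eq_card hli).trans (Fintype.card_coe t)

theorem span_image_eq_of_linearIndependent_of_finrank_eq {v : ι → V} {s t : Finset ι}
    (hts : t ⊆ s) (hli : LinearIndependent K (fun i : t => v i))
    (hrank : finrank K (span K (v '' (s : Set ι))) = t.card) :
    span K (v '' (t : Set ι)) = span K (v '' (s : Set ι)) := by
  have : FiniteDimensional K (span K (v '' (s : Set ι))) :=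
    FiniteDimensional.span_of_finite K (s.finite_toSet.image v)
  refine eq_of_le_of_finrank_eq (span_mono (Set.image_mono (by exact_mod_cast hts))) ?_
  rw [Finset.finrank_span_image_eq_card hli, hrank]

end LinearAlgebra

section InnerProduct

variable {E ι : Type*} [NormedAddCommGroup E] [InnerProductSpace ℝ E]

theorem inner_eq_of_mem_span_image {v : ι → E} {s : Set ι} {x y w : E}
    (h : ∀ i ∈ s, ⟪x, v i⟫ = ⟪y, v i⟫) (hw : w ∈ span ℝ (v '' s)) : ⟪x, w⟫ = ⟪y, w⟫ := by
  induction hw using span_induction with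
  | mem w hw =>
    obtain ⟨i, hi, rfl⟩ := hw
    exact h i hi
  | zero => simp only [inner_zero_right]
  | add w w' _ _ hw hw' => rw [inner_add_right, inner_add_right, hw, hw']
  | smul a w _ hw => rw [inner_smul_right, inner_smul_right, hw]

theorem forall_inner_eq_of_span_le {v : ι → E} {c : ι → ℝ} {s t : Set ι} {x y : E}
    (hspan : span ℝ (v '' s) ≤ span ℝ (v '' t)) (hts : t ⊆ s)
    (hy : ∀ i ∈ s, ⟪y, v i⟫ = c i) (hx : ∀ i ∈ t, ⟪x, v i⟫ = c i) :
    ∀ i ∈ s, ⟪x, v i⟫ = c i := by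
  intro j hj
  rw [← hy j hj]
  refine inner_eq_of_mem_span_image (fun i hi => ?_) (hspan (subset_span ⟨j, hj, rfl⟩))
  rw [hx i hi, hy i (hts hi)]

end InnerProduct

theorem LipschitzOnWith.continuousWithinAt_of_mem_nhdsWithin {α β : Type*}
    [PseudoEMetricSpace α] [PseudoEMetricSpace β] {f : α → β} {L : NNReal} {s t : Set α} {x : α}
    (hf : LipschitzOnWith L f t) (hx : x ∈ s) (ht : t ∈ 𝓝[s] x) : ContinuousWithinAt f s x :=
  (hf.continuousOn.continuousWithinAt (mem_of_mem_nhdsWithin hx ht)).mono_of_mem_nhdsWithin ht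

theorem stmt_15_general {H G : Type*} [NormedAddCommGroup H] [InnerProductSpace ℝ H]
    [NormedAddCommGroup G] [NormedSpace ℝ G]
    (D : Set G) {ι : Type*} (I₁ I₂ : Finset ι)
    (f : ι → G → ℝ) (g : ι → G → H)
    (C : G → Set H)
    (hCdef : ∀ p, C p = {x : H | (∀ i ∈ I₁, ⟪x, g i p⟫ = f i p) ∧
      (∀ i ∈ I₂, ⟪x, g i p⟫ ≤ f i p)})
    (pbar : G) (hpbar : pbar ∈ D) (xbar : H) (hxbarC : xbar ∈ C pbar)
    (hLip : ∀ i, ∃ K : NNReal, ∃ t ∈ nhdsWithin pbar D,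
      LipschitzOnWith K (f i) t ∧ LipschitzOnWith K (g i) t)
    -- RCRCQ at (pbar, xbar)
    (hRCRCQ : ∃ U₀ ∈ nhdsWithin pbar D, ∀ J : Finset ι, I₁ ⊆ J →
      (∀ i ∈ J, (i ∈ I₁ ∨ i ∈ I₂) ∧ ⟪xbar, g i pbar⟫ = f i pbar) →
      ∀ p ∈ U₀,
        Module.finrank ℝ (Submodule.span ℝ ((fun i => g i p) '' (J : Set ι))) =
        Module.finrank ℝ (Submodule.span ℝ ((fun i => g i pbar) '' (J : Set ι))))
    -- C(p) nonempty near pbar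
    (hCne : ∃ U₀ ∈ nhdsWithin pbar D, ∀ p ∈ U₀, (C p).Nonempty) :
    ∃ I₁' ⊆ I₁,
      I₁'.card = Module.finrank ℝ
        (Submodule.span ℝ ((fun i => g i pbar) '' (I₁ : Set ι))) ∧
      ∃ U ∈ nhdsWithin pbar D, ∀ p ∈ U,
        LinearIndependent ℝ (fun i : {i // i ∈ I₁'} => g i.1 p) ∧
        C p = {x : H | (∀ i ∈ I₁', ⟪x, g i p⟫ = f i p) ∧
          (∀ i ∈ I₂, ⟪x, g i p⟫ ≤ f i p)} := by
  obtain ⟨U₀, hU₀, hrank⟩ := hRCRCQ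
  obtain ⟨U₁, hU₁, hne⟩ := hCne
  obtain ⟨I₁', hsub, hli, hspan⟩ :=
    I₁.exists_subset_linearIndependent_span_image_eq (K := ℝ) (fun i => g i pbar)
  have hcard : finrank ℝ (span ℝ ((fun i => g i pbar) '' (I₁ : Set ι))) = I₁'.card := by
    rw [← hspan, Finset.finrank_span_image_eq_card hli]
  have hcont : ContinuousWithinAt (fun p (i : {i // i ∈ I₁'}) => g i.1 p) D pbar :=
    continuousWithinAt_pi.2 fun i => by
      obtain ⟨_, _, ht, -, hg⟩ := hLip i.1
      exact hg.continuousWithinAt_of_mem_nhdsWithin hpbar ht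
  have hli_near : ∀ᶠ p in 𝓝[D] pbar, LinearIndependent ℝ fun i : {i // i ∈ I₁'} => g i.1 p :=
    hcont.eventually hli.eventually
  have hactive : ∀ i ∈ I₁, (i ∈ I₁ ∨ i ∈ I₂) ∧ ⟪xbar, g i pbar⟫ = f i pbar := fun i hi =>
    ⟨Or.inl hi, (hCdef pbar ▸ hxbarC).1 i hi⟩
  refine ⟨I₁', hsub, hcard.symm, _, inter_mem hli_near (inter_mem hU₀ hU₁), ?_⟩
  rintro p ⟨hli_p : LinearIndependent ℝ fun i : {i // i ∈ I₁'} => g i.1 p, hp₀, hp₁⟩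
  have hspan_p := span_image_eq_of_linearIndependent_of_finrank_eq (v := fun i => g i p) hsub
    hli_p (by rw [hrank I₁ subset_rfl hactive p hp₀, hcard])
  obtain ⟨y, hy⟩ := hne p hp₁
  rw [hCdef p] at hy ⊢
  refine ⟨hli_p, Set.ext fun x => ⟨?_, ?_⟩⟩
  · rintro ⟨hx_eq, hx_le⟩
    exact ⟨fun i hi => hx_eq i (hsub hi), hx_le⟩
  · rintro ⟨hx_eq, hx_le⟩
    exact ⟨forall_inner_eq_of_span_le hspan_p.ge (by exact_mod_cast hsub) hy.1 hx_eq, hx_le⟩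

/-- Under RCRCQ, redundant equality constraints can be dropped locally: near `pbar` the set
`C(p)` coincides with the set defined by a linearly independent subfamily `I₁'` of the
equality constraints together with all inequality constraints. -/
theorem stmt_15 {H G : Type*} [NormedAddCommGroup H] [InnerProductSpace ℝ H]
    [CompleteSpace H] [NormedAddCommGroup G] [NormedSpace ℝ G]
    (D : Set G) {ι : Type*} [Fintype ι] (I₁ I₂ : Finset ι)
    (f : ι → G → ℝ) (g : ι → G → H)
    (C : G → Set H)
    (hCdef : ∀ p, C p = {x : H | (∀ i ∈ I₁, ⟪x, g i p⟫ = f i p) ∧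
      (∀ i ∈ I₂, ⟪x, g i p⟫ ≤ f i p)})
    (pbar : G) (hpbar : pbar ∈ D) (xbar : H) (hxbarC : xbar ∈ C pbar)
    (hLip : ∀ i, ∃ K : NNReal, ∃ t ∈ nhdsWithin pbar D,
      LipschitzOnWith K (f i) t ∧ LipschitzOnWith K (g i) t)
    -- RCRCQ at (pbar, xbar)
    (hRCRCQ : ∃ U₀ ∈ nhdsWithin pbar D, ∀ J : Finset ι, I₁ ⊆ J →
      (∀ i ∈ J, (i ∈ I₁ ∨ i ∈ I₂) ∧ ⟪xbar, g i pbar⟫ = f i pbar) →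
      ∀ p ∈ U₀,
        Module.finrank ℝ (Submodule.span ℝ ((fun i => g i p) '' (J : Set ι))) =
        Module.finrank ℝ (Submodule.span ℝ ((fun i => g i pbar) '' (J : Set ι))))
    -- C(p) nonempty near pbar
    (hCne : ∃ U₀ ∈ nhdsWithin pbar D, ∀ p ∈ U₀, (C p).Nonempty) :
    ∃ I₁' ⊆ I₁,
      I₁'.card = Module.finrank ℝ
        (Submodule.span ℝ ((fun i => g i pbar) '' (I₁ : Set ι))) ∧
      ∃ U ∈ nhdsWithin pbar D, ∀ p ∈ U,
        LinearIndependent ℝ (fun i : {i // i ∈ I₁'} => g i.1 p) ∧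
        C p = {x : H | (∀ i ∈ I₁', ⟪x, g i p⟫ = f i p) ∧
          (∀ i ∈ I₂, ⟪x, g i p⟫ ≤ f i p)} :=
  stmt_15_general D I₁ I₂ f g C hCdef pbar hpbar xbar hxbarC hLip hRCRCQ hCne
end
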